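/- For any K-simple constraint r and any K-atomic (elementary) constraint ψ over a clock in X, either ⟦r⟧ ∩ ⟦ψ⟧ = ∅ or ⟦r⟧ ⊆ ⟦ψ⟧. -/
import Mathlib


/-- A `K`-elementary constraint over a single clock: `x = c` (with `c ≤ K`),
`c < x < c+1` (with `c < K`), or `x > K`. -/
inductive Elem (K : ℕ) : Type
  | eq : (c : ℕ) → c ≤ K → Elem K
  | oo : (c : ℕ) → c < K → Elem K
  | gtK : Elem K

def Elem.sat {K : ℕ} : Elem K → ℝ → Prop
  | .eq c _, t => t = (c : ℝ)
  | .oo c _, t => (c : ℝ) < t ∧ t < (c : ℝ) + 1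
  | .gtK, t => (K : ℝ) < t

/-- Semantics of a `K`-simple constraint over clocks `X`. -/
def semS {X : Type} {K : ℕ} (r : X → Elem K) : Set (X → NNReal) :=
  {v | ∀ x, (r x).sat (v x : ℝ)}

/-- Semantics of a single `K`-elementary constraint `ψ` over the clock `x ∈ X`. -/
def semAtom {X : Type} {K : ℕ} (x : X) (ψ : Elem K) : Set (X → NNReal) :=
  {v | ψ.sat (v x : ℝ)}

lemma elem_incl_or_disj {K : ℕ} (a b : Elem K) :
    (∀ t : ℝ, a.sat t → b.sat t) ∨ (∀ t : ℝ, ¬ (a.sat t ∧ b.sat t)) := by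
  cases a with
  | eq c hc =>
    cases b with
    | eq c' hc' =>
      by_cases h : c = c'
      · left; intro t ht; subst h; exact ht
      · right; rintro t ⟨h1, h2⟩
        exact h (Nat.cast_injective (h1 ▸ h2))
    | oo c' hc' =>
      right; rintro t ⟨h1, h2⟩
      simp only [Elem.sat] at h1 h2
      have h3 : (c' : ℝ) < c := h1 ▸ h2.1
      have h4 : (c : ℝ) < c' + 1 := h1 ▸ h2.2
      have : c' < c := by exact_mod_cast h3
      have : (c : ℝ) ≥ c' + 1 := by exact_mod_cast this
      linarith
    | gtK =>
      right; rintro t ⟨h1, h2⟩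
      simp only [Elem.sat] at h1 h2
      have : (c : ℝ) ≤ K := by exact_mod_cast hc
      rw [h1] at h2; linarith
  | oo c hc =>
    cases b with
    | eq c' hc' =>
      right; rintro t ⟨h1, h2⟩
      simp only [Elem.sat] at h1 h2
      rw [h2] at h1
      have h3 : c < c' := by exact_mod_cast h1.1
      have h4 : (c' : ℝ) < c + 1 := h1.2
      have : (c' : ℝ) ≥ c + 1 := by exact_mod_cast h3
      linarith
    | oo c' hc' =>
      by_cases h : c = c'
      · left; intro t ht; subst h; exact ht
      · right; rintro t ⟨h1, h2⟩
        simp only [Elem.sat] at h1 h2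
        rcases Nat.lt_or_ge c c' with hlt | hge
        · have : (c' : ℝ) ≥ c + 1 := by exact_mod_cast hlt
          linarith [h1.2, h2.1]
        · have hlt : c' < c := lt_of_le_of_ne hge (Ne.symm h)
          have : (c : ℝ) ≥ c' + 1 := by exact_mod_cast hlt
          linarith [h2.2, h1.1]
    | gtK =>
      right; rintro t ⟨h1, h2⟩
      simp only [Elem.sat] at h1 h2
      have : (c : ℝ) + 1 ≤ K := by exact_mod_cast hc
      linarith [h1.2]
  | gtK =>
    cases b with
    | eq c' hc' =>
      right; rintro t ⟨h1, h2⟩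
      simp only [Elem.sat] at h1 h2
      have : (c' : ℝ) ≤ K := by exact_mod_cast hc'
      rw [h2] at h1; linarith
    | oo c' hc' =>
      right; rintro t ⟨h1, h2⟩
      simp only [Elem.sat] at h1 h2
      have : (c' : ℝ) + 1 ≤ K := by exact_mod_cast hc'
      linarith [h2.2]
    | gtK => left; intro t ht; exact ht

/-- For any `K`-simple constraint `r` and any `K`-elementary constraint `ψ` over a clock
`x ∈ X`, either `⟦r⟧ ∩ ⟦ψ⟧ = ∅` or `⟦r⟧ ⊆ ⟦ψ⟧`. -/
theorem simple_atomic_disjoint_or_included {X : Type} {K : ℕ} (hK : 0 < K)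
    (r : X → Elem K) (x : X) (ψ : Elem K) :
    semS r ∩ semAtom x ψ = ∅ ∨ semS r ⊆ semAtom x ψ := by
  rcases elem_incl_or_disj (r x) ψ with h | h
  · right; intro v hv; exact h _ (hv x)
  · left
    ext v
    simp only [Set.mem_inter_iff, Set.mem_empty_iff_false, iff_false]
    rintro ⟨hv, hψ⟩
    exact h _ ⟨hv x, hψ⟩
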